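/- For a monoid S, every subact of every indecomposable right S-act is indecomposable if and only if S is left reversible. -/
import Mathlib


universe u

/-- A right `S`-act structure on a nonempty type `A`: a right action of the monoid `S`. -/
class RightAct (S : Type u) [Monoid S] (A : Type u) : Type u where
  act : A → S → A
  act_one : ∀ a : A, act a 1 = a
  act_mul : ∀ (a : A) (s t : S), act (act a s) t = act a (s * t)
  nonempty : Nonempty A

infixl:70 " ⊛ " => RightAct.act

/-- `S` is left reversible: every two right ideals (equiv. principal ones) intersect. -/
def LeftReversible (S : Type u) [Monoid S] : Prop :=
  ∀ a b : S, ∃ u v : S, a * u = b * v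

/-- A left zero element of the monoid `S`. -/
def IsLeftZero (S : Type u) [Monoid S] (z : S) : Prop :=
  ∀ s : S, z * s = z

/-- `f : A → B` is a homomorphism of right `S`-acts. -/
def IsActHom (S : Type u) [Monoid S] {A B : Type u} [RightAct S A] [RightAct S B]
    (f : A → B) : Prop :=
  ∀ (a : A) (s : S), f (a ⊛ s) = f a ⊛ s

/-- The restriction of `f : A → B` to the subset `C` is a homomorphism of right `S`-acts. -/
def IsActHomOn (S : Type u) [Monoid S] {A B : Type u} [RightAct S A] [RightAct S B]
    (f : A → B) (C : Set A) : Prop :=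
  ∀ a ∈ C, ∀ s : S, f (a ⊛ s) = f a ⊛ s

/-- A subact: a nonempty subset closed under the action. -/
def IsSubact (S : Type u) [Monoid S] {A : Type u} [RightAct S A] (C : Set A) : Prop :=
  C.Nonempty ∧ ∀ a ∈ C, ∀ s : S, a ⊛ s ∈ C

/-- A zero element of an act: fixed by the action of every `s ∈ S`. -/
def IsZeroElem (S : Type u) [Monoid S] {A : Type u} [RightAct S A] (θ : A) : Prop :=
  ∀ s : S, θ ⊛ s = θ

/-- A subset `D` (viewed as an act) is decomposable: it is the disjoint union of two
nonempty subacts. -/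
def DecomposableSet (S : Type u) [Monoid S] {A : Type u} [RightAct S A] (D : Set A) : Prop :=
  ∃ B C : Set A, IsSubact S B ∧ IsSubact S C ∧ B ∪ C = D ∧ B ∩ C = ∅

/-- A subset (viewed as an act) is indecomposable. -/
def IndecomposableSet (S : Type u) [Monoid S] {A : Type u} [RightAct S A] (D : Set A) : Prop :=
  ¬ DecomposableSet S D

/-- The act `A` is decomposable. -/
def Decomposable (S : Type u) [Monoid S] (A : Type u) [RightAct S A] : Prop :=
  DecomposableSet S (Set.univ : Set A)

/-- The act `A` is indecomposable. -/
def Indecomposable (S : Type u) [Monoid S] (A : Type u) [RightAct S A] : Prop :=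
  ¬ Decomposable S A

/-- A cyclic act: generated by a single element. -/
def CyclicAct (S : Type u) [Monoid S] (A : Type u) [RightAct S A] : Prop :=
  ∃ a : A, ∀ x : A, ∃ s : S, x = a ⊛ s

/-- `A` is a retract of `B`. -/
def IsRetractOf (S : Type u) [Monoid S] (A B : Type u) [RightAct S A] [RightAct S B] : Prop :=
  ∃ (i : A → B) (p : B → A), IsActHom S i ∧ IsActHom S p ∧ ∀ a : A, p (i a) = a

/-- `Q` is an injective act: every homomorphism from a subact `C` of any act `B` into `Q`
extends to `B`. -/
def ActInjective (S : Type u) [Monoid S] (Q : Type u) [RightAct S Q] : Prop :=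
  ∀ (B : Type u) [RightAct S B], ∀ C : Set B, IsSubact S C →
    ∀ f : B → Q, IsActHomOn S f C →
      ∃ g : B → Q, IsActHom S g ∧ Set.EqOn g f C

/-- `Q` is InC-injective: injective relative to all embeddings into indecomposable acts. -/
def InCInjective (S : Type u) [Monoid S] (Q : Type u) [RightAct S Q] : Prop :=
  ∀ (B : Type u) [RightAct S B], Indecomposable S B → ∀ C : Set B, IsSubact S C →
    ∀ f : B → Q, IsActHomOn S f C →
      ∃ g : B → Q, IsActHom S g ∧ Set.EqOn g f C

/-- `Q` is InD-injective: injective relative to all embeddings of indecomposable acts. -/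
def InDInjective (S : Type u) [Monoid S] (Q : Type u) [RightAct S Q] : Prop :=
  ∀ (B : Type u) [RightAct S B], ∀ C : Set B, IsSubact S C → IndecomposableSet S C →
    ∀ f : B → Q, IsActHomOn S f C →
      ∃ g : B → Q, IsActHom S g ∧ Set.EqOn g f C

/-- `Q` is PInD-injective: every monomorphism from an indecomposable subact extends. -/
def PInDInjective (S : Type u) [Monoid S] (Q : Type u) [RightAct S Q] : Prop :=
  ∀ (B : Type u) [RightAct S B], ∀ C : Set B, IsSubact S C → IndecomposableSet S C →
    ∀ f : B → Q, IsActHomOn S f C → Set.InjOn f C →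
      ∃ g : B → Q, IsActHom S g ∧ Set.EqOn g f C

/-- `A` is quasi injective: homomorphisms from subacts of `A` to `A` extend to `A`. -/
def QuasiInjective (S : Type u) [Monoid S] (A : Type u) [RightAct S A] : Prop :=
  ∀ C : Set A, IsSubact S C → ∀ f : A → A, IsActHomOn S f C →
    ∃ g : A → A, IsActHom S g ∧ Set.EqOn g f C

/-- `A` is pseudo injective: monomorphisms from subacts of any act into `A` extend. -/
def PseudoInjective (S : Type u) [Monoid S] (A : Type u) [RightAct S A] : Prop :=
  ∀ (C : Type u) [RightAct S C], ∀ B : Set C, IsSubact S B →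
    ∀ f : C → A, IsActHomOn S f B → Set.InjOn f B →
      ∃ g : C → A, IsActHom S g ∧ Set.EqOn g f B

/-- A subact `Q` of `A` (viewed as an act in its own right) is injective. -/
def ActInjectiveSet (S : Type u) [Monoid S] {A : Type u} [RightAct S A] (Q : Set A) : Prop :=
  ∀ (B : Type u) [RightAct S B], ∀ C : Set B, IsSubact S C →
    ∀ f : B → A, IsActHomOn S f C → (∀ c ∈ C, f c ∈ Q) →
      ∃ g : B → A, IsActHom S g ∧ (∀ b : B, g b ∈ Q) ∧ Set.EqOn g f C

/-- A subact `Q` of `A` (viewed as an act in its own right) is InD-injective. -/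
def InDInjectiveSet (S : Type u) [Monoid S] {A : Type u} [RightAct S A] (Q : Set A) : Prop :=
  ∀ (B : Type u) [RightAct S B], ∀ C : Set B, IsSubact S C → IndecomposableSet S C →
    ∀ f : B → A, IsActHomOn S f C → (∀ c ∈ C, f c ∈ Q) →
      ∃ g : B → A, IsActHom S g ∧ (∀ b : B, g b ∈ Q) ∧ Set.EqOn g f C

/-- A subact `Q` of `A` (viewed as an act in its own right) is PInD-injective. -/
def PInDInjectiveSet (S : Type u) [Monoid S] {A : Type u} [RightAct S A] (Q : Set A) : Prop :=
  ∀ (B : Type u) [RightAct S B], ∀ C : Set B, IsSubact S C → IndecomposableSet S C →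
    ∀ f : B → A, IsActHomOn S f C → Set.InjOn f C → (∀ c ∈ C, f c ∈ Q) →
      ∃ g : B → A, IsActHom S g ∧ (∀ b : B, g b ∈ Q) ∧ Set.EqOn g f C

/-- The monoid `S` as a right act over itself, by multiplication. -/
instance selfAct (S : Type u) [Monoid S] : RightAct S S where
  act a s := a * s
  act_one := mul_one
  act_mul a s t := mul_assoc a s t
  nonempty := ⟨1⟩

/-- `Q` is weakly injective: homomorphisms from right ideals of `S` into `Q` extend to `S`. -/
def WeaklyInjective (S : Type u) [Monoid S] (Q : Type u) [RightAct S Q] : Prop :=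
  ∀ I : Set S, IsSubact S I → ∀ f : S → Q, IsActHomOn S f I →
    ∃ g : S → Q, IsActHom S g ∧ Set.EqOn g f I

/-- The relation whose equivalence closure has the indecomposable components as classes. -/
def ActRel (S : Type u) [Monoid S] {A : Type u} [RightAct S A] (a b : A) : Prop :=
  ∃ s : S, b = a ⊛ s

/-- The indecomposable component of the element `a` of an act. -/
def ActComponent (S : Type u) [Monoid S] {A : Type u} [RightAct S A] (a : A) : Set A :=
  {b | Relation.EqvGen (ActRel S) a b}

/-- Every subact of every indecomposable right `S`-act is indecomposable
iff `S` is left reversible. -/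
theorem subacts_of_indecomposable_indecomposable_iff_leftReversible (S : Type u) [Monoid S] :
    (∀ (A : Type u) [RightAct S A], Indecomposable S A →
      ∀ C : Set A, IsSubact S C → IndecomposableSet S C) ↔ LeftReversible S := by
  have selfact : ∀ a s : S, a ⊛ s = a * s := fun _ _ => rfl
  constructor
  · intro h a b
    by_contra hab
    push_neg at hab
    -- S itself is indecomposable
    have hS : Indecomposable S S := by
      rintro ⟨B, C, hB, hC, hBC, hdisj⟩
      rcases hC.1 with ⟨c, hc⟩
      have h1 : (1 : S) ∈ B ∪ C := hBC ▸ Set.mem_univ 1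
      have hcB : c ∈ B := by
        rcases h1 with h1 | h1
        · have := hB.2 1 h1 c
          rwa [selfact, one_mul] at this
        · exfalso
          have := hC.2 1 h1 c
          rw [selfact, one_mul] at this
          rcases hB.1 with ⟨x, hx⟩
          have h1B : (1 : S) ∈ B ∪ C := hBC ▸ Set.mem_univ 1
          -- c ∈ C; now show some element in both
          have : ∀ s : S, s ∈ C := by
            intro s
            have := hC.2 1 h1 s
            rwa [selfact, one_mul] at this
          exact absurd (Set.mem_inter hx (this x)) (by simp [hdisj])
      exact absurd (Set.mem_inter hcB hc) (by simp [hdisj])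
    -- the subact aS ∪ bS of S is decomposable
    set B : Set S := {x | ∃ u, x = a * u} with hBdef
    set C : Set S := {x | ∃ v, x = b * v} with hCdef
    have hBsub : IsSubact S B := by
      refine ⟨⟨a, 1, (mul_one a).symm⟩, ?_⟩
      rintro x ⟨u, rfl⟩ s
      exact ⟨u * s, by rw [selfact, mul_assoc]⟩
    have hCsub : IsSubact S C := by
      refine ⟨⟨b, 1, (mul_one b).symm⟩, ?_⟩
      rintro x ⟨v, rfl⟩ s
      exact ⟨v * s, by rw [selfact, mul_assoc]⟩
    have hUnion : IsSubact S (B ∪ C) := by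
      refine ⟨hBsub.1.mono Set.subset_union_left, ?_⟩
      rintro x (hx | hx) s
      · exact Or.inl (hBsub.2 x hx s)
      · exact Or.inr (hCsub.2 x hx s)
    have hdec : DecomposableSet S (B ∪ C) := by
      refine ⟨B, C, hBsub, hCsub, rfl, ?_⟩
      ext x
      simp only [Set.mem_inter_iff, Set.mem_empty_iff_false, iff_false]
      rintro ⟨⟨u, rfl⟩, ⟨v, hv⟩⟩
      exact hab u v hv
    exact h S hS (B ∪ C) hUnion hdec
  · intro hrev A _ hA C hC
    rintro ⟨B₁, B₂, hB₁, hB₂, hUnion, hdisj⟩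
    rcases hB₁.1 with ⟨x, hx⟩
    rcases hB₂.1 with ⟨y, hy⟩
    -- in an indecomposable act over a left reversible monoid, any two elements
    -- have intersecting orbits
    have key : ∀ z : A, ∃ s t : S, x ⊛ s = z ⊛ t := by
      by_contra hk
      push_neg at hk
      rcases hk with ⟨z, hz⟩
      set D : Set A := {w | ∃ s t : S, x ⊛ s = w ⊛ t} with hDdef
      have hxD : x ∈ D := ⟨1, 1, rfl⟩
      have hDsub : IsSubact S D := by
        refine ⟨⟨x, hxD⟩, ?_⟩
        rintro w ⟨s, t, hst⟩ u
        rcases hrev t u with ⟨p, q, hpq⟩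
        refine ⟨s * p, q, ?_⟩
        rw [← RightAct.act_mul, hst, RightAct.act_mul, hpq, ← RightAct.act_mul,
          RightAct.act_mul]
      have hDc : IsSubact S Dᶜ := by
        refine ⟨⟨z, fun hzD => hz hzD.choose hzD.choose_spec.choose
          hzD.choose_spec.choose_spec⟩, ?_⟩
        intro w hw u
        intro hmem
        rcases hmem with ⟨s, t, hst⟩
        exact hw ⟨s, u * t, by rw [hst, RightAct.act_mul]⟩
      apply hA
      refine ⟨D, Dᶜ, hDsub, hDc, Set.union_compl_self D, Set.inter_compl_self D⟩
    rcases key y with ⟨s, t, hst⟩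
    have hxC : x ∈ C := hUnion ▸ Or.inl hx
    have hyC : y ∈ C := hUnion ▸ Or.inr hy
    have h1 : x ⊛ s ∈ B₁ := hB₁.2 x hx s
    have h2 : y ⊛ t ∈ B₂ := hB₂.2 y hy t
    rw [hst] at h1
    exact absurd (Set.mem_inter h1 h2) (by simp [hdisj])
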